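/- For all k ≥ 2 and i ≥ 0, the number of up-down words of length 2i over {1,…,k} avoiding the vincular pattern 1-23 equals the number of up-down words of length 2i over {1,…,k} avoiding the consecutive pattern 132; in fact the two sets of words coincide. -/
import Mathlib


/-- `w` is an up-down word: `w₀ < w₁ > w₂ < w₃ > ⋯` (0-indexed). -/
def IsUpDown {l k : ℕ} (w : Fin l → Fin k) : Prop :=
  ∀ j : ℕ, ∀ h : j + 1 < l,
    (j % 2 = 0 → w ⟨j, by omega⟩ < w ⟨j + 1, h⟩) ∧
    (j % 2 = 1 → w ⟨j + 1, h⟩ < w ⟨j, by omega⟩)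

/-- `w` avoids the vincular pattern 1-23: no `a < j` with
`w a < w j < w (j+1)` (the last two letters adjacent). -/
def AvoidsV1_23 {l k : ℕ} (w : Fin l → Fin k) : Prop :=
  ∀ a j : ℕ, ∀ haj : a < j, ∀ h : j + 1 < l,
    ¬ (w ⟨a, by omega⟩ < w ⟨j, by omega⟩ ∧ w ⟨j, by omega⟩ < w ⟨j + 1, h⟩)

/-- `w` avoids the consecutive pattern 132. -/
def AvoidsC132 {l k : ℕ} (w : Fin l → Fin k) : Prop :=
  ∀ j : ℕ, ∀ h : j + 2 < l,
    ¬ (w ⟨j, by omega⟩ < w ⟨j + 2, h⟩ ∧ w ⟨j + 2, h⟩ < w ⟨j + 1, by omega⟩)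

lemma bot_anti {l k : ℕ} (w : Fin l → Fin k) (hu : IsUpDown w) (hc : AvoidsC132 w) :
    ∀ m p : ℕ, p % 2 = 0 → ∀ h : p + 2 * m < l,
      w ⟨p + 2 * m, h⟩ ≤ w ⟨p, by omega⟩ := by
  intro m
  induction m with
  | zero => intro p _ h; simp
  | succ n ih =>
    intro p hp h
    have h2 : p + 2 < l := by omega
    have step : w ⟨p + 2, h2⟩ ≤ w ⟨p, by omega⟩ := by
      have ha := (hu p (by omega)).1 hp
      have hb := (hu (p + 1) (by omega)).2 (by omega)
      have hcc := hc p h2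
      by_contra hlt
      push_neg at hlt
      exact hcc ⟨hlt, by convert hb using 2 <;> omega⟩
    have := ih (p + 2) (by omega) (by omega : p + 2 + 2 * n < l)
    calc w ⟨p + 2 * (n + 1), h⟩ = w ⟨p + 2 + 2 * n, by omega⟩ :=
        congrArg w (by rw [Fin.mk.injEq]; omega)
      _ ≤ w ⟨p + 2, h2⟩ := this
      _ ≤ w ⟨p, by omega⟩ := step

lemma key {k i : ℕ} (w : Fin (2 * i) → Fin k) (hu : IsUpDown w) :
    AvoidsV1_23 w ↔ AvoidsC132 w := by
  constructor
  · intro hv j h ⟨h1, h2⟩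
    -- j must be even
    have hj : j % 2 = 0 := by
      rcases Nat.mod_two_eq_zero_or_one j with h0 | h0
      · exact h0
      · exact absurd ((hu j (by omega)).2 h0) (by
          intro hx
          exact absurd (lt_trans h1 h2) (by
            intro hy
            exact absurd (lt_trans hy hx) (lt_irrefl _)))
    -- j + 3 < 2*i since j+2 is even and < 2*i
    have h3 : j + 3 < 2 * i := by omega
    have hasc := (hu (j + 2) h3).1 (by omega)
    exact hv j (j + 2) (by omega) h3 ⟨h1, by convert hasc using 2 <;> omega⟩
  · intro hc a j haj h ⟨h1, h2⟩
    -- j must be even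
    have hj : j % 2 = 0 := by
      rcases Nat.mod_two_eq_zero_or_one j with h0 | h0
      · exact h0
      · exact absurd ((hu j h).2 h0) (not_lt.mpr (le_of_lt h2))
    rcases Nat.mod_two_eq_zero_or_one a with ha | ha
    · -- a even: w j ≤ w a
      have : w ⟨j, by omega⟩ ≤ w ⟨a, by omega⟩ := by
        have hb := bot_anti w hu hc ((j - a) / 2) a ha
          (by omega : a + 2 * ((j - a) / 2) < 2 * i)
        have e : (⟨j, by omega⟩ : Fin (2 * i)) = ⟨a + 2 * ((j - a) / 2), by omega⟩ := by
          rw [Fin.mk.injEq]; omega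
        exact le_trans (le_of_eq (congrArg w e)) hb
      exact absurd h1 (not_lt.mpr this)
    · -- a odd: w (a+1) < w a and w j ≤ w (a+1)
      have ha1 : a + 1 < 2 * i := by omega
      have hd := (hu a ha1).2 ha
      have hle : w ⟨j, by omega⟩ ≤ w ⟨a + 1, ha1⟩ := by
        have hane : a + 1 ≤ j := haj
        have hb := bot_anti w hu hc ((j - (a + 1)) / 2) (a + 1) (by omega)
          (by omega : a + 1 + 2 * ((j - (a + 1)) / 2) < 2 * i)
        have e : (⟨j, by omega⟩ : Fin (2 * i)) = ⟨a + 1 + 2 * ((j - (a + 1)) / 2), by omega⟩ := by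
          rw [Fin.mk.injEq]; omega
        exact le_trans (le_of_eq (congrArg w e)) hb
      exact absurd h1 (not_lt.mpr (le_of_lt (lt_of_le_of_lt hle hd)))

/-- For `k ≥ 2`, `i ≥ 0`, the 1-23-avoiding and `⟨132⟩`-avoiding up-down words
of even length `2i` over `{1,…,k}` coincide; in particular, they are
equinumerous. -/
theorem stmt_16 (k i : ℕ) (hk : 2 ≤ k) :
    {w : Fin (2 * i) → Fin k | IsUpDown w ∧ AvoidsV1_23 w} =
      {w : Fin (2 * i) → Fin k | IsUpDown w ∧ AvoidsC132 w} ∧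
    {w : Fin (2 * i) → Fin k | IsUpDown w ∧ AvoidsV1_23 w}.ncard =
      {w : Fin (2 * i) → Fin k | IsUpDown w ∧ AvoidsC132 w}.ncard := by
  have hset : {w : Fin (2 * i) → Fin k | IsUpDown w ∧ AvoidsV1_23 w} =
      {w : Fin (2 * i) → Fin k | IsUpDown w ∧ AvoidsC132 w} := by
    ext w
    simp only [Set.mem_setOf_eq]
    exact and_congr_right fun hu => key w hu
  exact ⟨hset, by rw [hset]⟩
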